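/- With the splitting ς: N → ℤ^m and β(k) := Ψ(k) − ς(k), one has β(k) ∈ Eff for every k ∈ N ∩ |Σ|, and the set { w^{Ψ(k)} := Q^{β(k)} x^k : k ∈ N ∩ |Σ| } is a topological ℂ[[Q]]-basis of the completed semigroup ring ℂ{M}, i.e. ℂ{M} = (⊕_{k ∈ N∩|Σ|} ℂ·w^{Ψ(k)})[[Q]]. -/

import Mathlib

open Finset
open scoped Classical

/-- Membership in the cone spanned by the rays indexed by `I`,
with nonnegative integer coefficients. -/
def InCone {D m : ℕ} (b : Fin m → Fin D → ℤ) (I : Finset (Fin m)) (k : Fin D → ℤ) : Prop :=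
  ∃ c : Fin m → ℕ, (∀ i, c i ≠ 0 → i ∈ I) ∧ k = ∑ i, (c i : ℤ) • b i

/-- A smooth (simplicial, with smooth cones) fan in `ℤ^D`, recorded combinatorially:
`b` are the primitive ray generators, `cones` the index sets of cones. -/
structure SmoothFan (D m : ℕ) where
  b : Fin m → Fin D → ℤ
  cones : Finset (Finset (Fin m))
  empty_mem : ∅ ∈ cones
  ray_mem : ∀ i : Fin m, {i} ∈ cones
  downward : ∀ I ∈ cones, ∀ J ⊆ I, J ∈ cones
  smooth : ∀ I ∈ cones,
    LinearIndependent ℚ (fun i : {x // x ∈ I} => fun j => (b i.1 j : ℚ))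
  inter : ∀ I ∈ cones, ∀ J ∈ cones, ∀ k, InCone b I k → InCone b J k → InCone b (I ∩ J) k
  convex : ∀ k l, (∃ I ∈ cones, InCone b I k) → (∃ J ∈ cones, InCone b J l) →
      ∃ K ∈ cones, InCone b K (k + l)

/-- `k` is a lattice point of the support `|Σ|` of the fan. -/
def SmoothFan.InSupport {D m : ℕ} (F : SmoothFan D m) (k : Fin D → ℤ) : Prop :=
  ∃ I ∈ F.cones, InCone F.b I k

/-- The coefficient vector `Ψ(k) ∈ (ℤ_{≥0})^m` of a lattice point of the support. -/
noncomputable def SmoothFan.Psi {D m : ℕ} (F : SmoothFan D m) (k : Fin D → ℤ) : Fin m → ℕ :=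
  if h : ∃ c : Fin m → ℕ, (∃ I ∈ F.cones, ∀ i, c i ≠ 0 → i ∈ I) ∧
      k = ∑ i, (c i : ℤ) • F.b i
  then h.choose else 0

/-- `d(k,l) = Ψ(k) + Ψ(l) − Ψ(k+l)`. -/
noncomputable def SmoothFan.dEff {D m : ℕ} (F : SmoothFan D m) (k l : Fin D → ℤ) :
    Fin m → ℤ :=
  fun i => (F.Psi k i : ℤ) + (F.Psi l i : ℤ) - (F.Psi (k + l) i : ℤ)

/-- The map `ℤ^m → N`, `e_j ↦ b_j` (third arrow of the fan sequence). -/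
def SmoothFan.toN {D m : ℕ} (F : SmoothFan D m) (v : Fin m → ℤ) : Fin D → ℤ :=
  ∑ j, v j • F.b j

/-- The set of effective curve classes `L ∩ Σ_{σ_I ∈ Σ} C_I`, where
`C_I = {d ∈ L ⊗ ℚ : d_i ≥ 0 for i ∉ I}`. -/
def SmoothFan.EffSet {D m : ℕ} (F : SmoothFan D m) : Set (Fin m → ℤ) :=
  {v | F.toN v = 0 ∧
    ∃ f : Finset (Fin m) → (Fin m → ℚ),
      ((fun i => (v i : ℚ)) = ∑ I ∈ F.cones, f I) ∧
      ∀ I ∈ F.cones,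
        ((∑ j, f I j • (fun t => (F.b j t : ℚ))) = 0) ∧ (∀ i ∉ I, 0 ≤ f I i)}

/-- `Eff(X_Σ)` as an additive submonoid (the semigroup generated by effective classes). -/
def SmoothFan.EffM {D m : ℕ} (F : SmoothFan D m) : AddSubmonoid (Fin m → ℤ) :=
  AddSubmonoid.closure F.EffSet

/-- `(ℤ_{≥0})^m` as a submonoid of `ℤ^m`. -/
def nonnegM (m : ℕ) : AddSubmonoid (Fin m → ℤ) where
  carrier := {a | ∀ i, 0 ≤ a i}
  zero_mem' := fun _ => le_rfl
  add_mem' := fun ha hb i => add_nonneg (ha i) (hb i)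

/-- The semigroup `M = Eff(X_Σ) + (ℤ_{≥0})^m ⊆ ℤ^m`. -/
def SmoothFan.Mmon {D m : ℕ} (F : SmoothFan D m) : AddSubmonoid (Fin m → ℤ) :=
  F.EffM ⊔ nonnegM m

/-- The semigroup `N ∩ |Σ|` of lattice points of the (convex) support. -/
def SmoothFan.SuppM {D m : ℕ} (F : SmoothFan D m) : AddSubmonoid (Fin D → ℤ) :=
  AddSubmonoid.closure {k | F.InSupport k}

/-- `β(k) = Ψ(k) − ς(k)`, for a splitting `ς` of the fan sequence. -/
noncomputable def SmoothFan.beta {D m : ℕ} (F : SmoothFan D m)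
    (ς : (Fin D → ℤ) →+ (Fin m → ℤ)) (k : Fin D → ℤ) : Fin m → ℤ :=
  (fun i => (F.Psi k i : ℤ)) - ς k

/-!
Since `b_i`, `i ∈ I₀`, is a `ℚ`-basis of `N ⊗ ℚ` and `ς(b_i) = e_i`, every `ς(k)` is supported
on `I₀`. Hence `β(k) = Ψ(k) − ς(k)` is nonnegative off `I₀` and lies in the kernel of
`π : e_j ↦ b_j`, so it is effective with respect to the cone `σ_{I₀}`.

For the monomials, `M` is described without reference to `ς`: `v ∈ M` iff `π v ∈ |Σ|` and
`v − Ψ(π v) ∈ Eff`. Indeed, for `n ≥ 0` the class `n − Ψ(π n)` is nonnegative off the cone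
carrying `π n`. The map `v ↦ (v − ς(π v), π v)` is inverted by `(d, k) ↦ d + ς(k)`, and it sends
`v − Ψ(π v)` to `d − β(k)`.
-/

open Submodule Module in
theorem LinearIndependent.exists_smul_mem_span_of_card_eq_finrank {R M ι : Type*} [CommRing R]
    [IsDomain R] [AddCommGroup M] [Module R M] [Module.Finite R M] [Fintype ι] {b : ι → M}
    (hb : LinearIndependent R b) (hcard : Fintype.card ι = finrank R M) (x : M) :
    ∃ a : R, a ≠ 0 ∧ a • x ∈ span R (Set.range b) := by
  have hquot : finrank R (M ⧸ span R (Set.range b)) = 0 := by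
    have := (span R (Set.range b)).finrank_quotient_add_finrank
    rw [finrank_span_eq_card hb, hcard] at this
    omega
  obtain ⟨a, ha, hax⟩ := finrank_eq_zero_iff.mp hquot (Submodule.Quotient.mk x)
  exact ⟨a, ha, (Quotient.mk_eq_zero _).mp (by rwa [Quotient.mk_smul])⟩

namespace SmoothFan

variable {D m : ℕ} (F : SmoothFan D m)

@[simp]
lemma toN_zero : F.toN 0 = 0 := by
  simp [toN]

@[simp]
lemma toN_add (a b : Fin m → ℤ) : F.toN (a + b) = F.toN a + F.toN b := by
  simp [toN, add_smul, Finset.sum_add_distrib]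

@[simp]
lemma toN_sub (a b : Fin m → ℤ) : F.toN (a - b) = F.toN a - F.toN b := by
  simp [toN, sub_smul, Finset.sum_sub_distrib]

lemma toN_eq_zero_of_mem_effM {e : Fin m → ℤ} (he : e ∈ F.EffM) : F.toN e = 0 := by
  induction he using AddSubmonoid.closure_induction with
  | mem x hx => exact hx.1
  | zero => exact F.toN_zero
  | add x y _ _ hx hy => rw [F.toN_add, hx, hy, add_zero]

lemma psi_spec {k : Fin D → ℤ} (hk : F.InSupport k) :
    (∃ I ∈ F.cones, ∀ i, F.Psi k i ≠ 0 → i ∈ I) ∧ k = ∑ i, (F.Psi k i : ℤ) • F.b i := by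
  obtain ⟨I, hI, c, hc, hkc⟩ := hk
  have h : ∃ c : Fin m → ℕ, (∃ I ∈ F.cones, ∀ i, c i ≠ 0 → i ∈ I) ∧
      k = ∑ i, (c i : ℤ) • F.b i := ⟨c, ⟨I, hI, hc⟩, hkc⟩
  rw [Psi, dif_pos h]
  exact h.choose_spec

lemma toN_psi {k : Fin D → ℤ} (hk : F.InSupport k) :
    F.toN (fun i => (F.Psi k i : ℤ)) = k :=
  (F.psi_spec hk).2.symm

lemma inSupport_zero : F.InSupport 0 :=
  ⟨∅, F.empty_mem, 0, by simp, by simp⟩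

lemma inSupport_natCast_smul_b (j : Fin m) (c : ℕ) : F.InSupport ((c : ℤ) • F.b j) := by
  refine ⟨{j}, F.ray_mem j, Pi.single j c, fun i hi => ?_, ?_⟩
  · by_contra hij
    simp [Finset.notMem_singleton.mp hij] at hi
  · rw [Finset.sum_eq_single j (fun i _ hij => by simp [hij]) (by simp)]
    simp

lemma inSupport_toN_of_nonneg {n : Fin m → ℤ} (hn : ∀ i, 0 ≤ n i) : F.InSupport (F.toN n) := by
  refine Finset.sum_induction _ F.InSupport (fun k l => F.convex k l) F.inSupport_zero
    fun j _ => ?_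
  simpa [Int.toNat_of_nonneg (hn j)] using F.inSupport_natCast_smul_b j (n j).toNat

lemma mem_effSet_of_nonneg_off_cone {d : Fin m → ℤ} {I : Finset (Fin m)} (hI : I ∈ F.cones)
    (hd : F.toN d = 0) (hnonneg : ∀ i ∉ I, 0 ≤ d i) : d ∈ F.EffSet := by
  refine ⟨hd, Pi.single I (fun i => (d i : ℚ)), by simp [Finset.sum_pi_single', hI],
    fun J _ => ?_⟩
  by_cases hJI : J = I
  · subst hJI
    refine ⟨?_, fun i hi => by simpa using hnonneg i hi⟩
    ext t
    simpa [toN, Finset.sum_apply] using congr_arg (fun v : Fin D → ℤ => (v t : ℚ)) hd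
  · simp [hJI]

lemma linearIndependent_b_of_mem_cones {I : Finset (Fin m)} (hI : I ∈ F.cones) :
    LinearIndependent ℤ (fun i : I => F.b i) :=
  ((F.smooth I hI).restrict_scalars' ℤ).of_comp
    (LinearMap.compLeft (Int.castAddHom ℚ).toIntLinearMap (Fin D))

lemma mem_Mmon_iff (v : Fin m → ℤ) :
    v ∈ F.Mmon ↔
      F.InSupport (F.toN v) ∧ v - (fun i => (F.Psi (F.toN v) i : ℤ)) ∈ F.EffM := by
  constructor
  · intro hv
    obtain ⟨e, he, n, hn, rfl⟩ := AddSubmonoid.mem_sup.mp hv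
    have hn : ∀ i, 0 ≤ n i := hn
    have htoN : F.toN (e + n) = F.toN n := by
      rw [F.toN_add, F.toN_eq_zero_of_mem_effM he, zero_add]
    have hk : F.InSupport (F.toN n) := F.inSupport_toN_of_nonneg hn
    rw [htoN]
    obtain ⟨I, hI, hψI⟩ := (F.psi_spec hk).1
    have hrest : n - (fun i => (F.Psi (F.toN n) i : ℤ)) ∈ F.EffSet := by
      refine F.mem_effSet_of_nonneg_off_cone hI (by rw [F.toN_sub, F.toN_psi hk, sub_self])
        fun i hi => ?_
      have hψ : F.Psi (F.toN n) i = 0 := by_contra fun h => hi (hψI i h)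
      simpa [hψ] using hn i
    refine ⟨hk, ?_⟩
    rw [add_sub_assoc]
    exact add_mem he (AddSubmonoid.subset_closure hrest)
  · rintro ⟨-, hv⟩
    refine AddSubmonoid.mem_sup.mpr ⟨_, hv, _, fun i => Int.natCast_nonneg _, sub_add_cancel _ _⟩

section Splitting

variable {ς : (Fin D → ℤ) →+ (Fin m → ℤ)}

lemma splitting_apply_eq_zero_of_notMem {I₀ : Finset (Fin m)} (hI₀ : I₀ ∈ F.cones)
    (hcard : I₀.card = D) (hς : ∀ i ∈ I₀, ς (F.b i) = Pi.single i 1) (v : Fin D → ℤ)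
    {i : Fin m} (hi : i ∉ I₀) : ς v i = 0 := by
  let coord : (Fin D → ℤ) →ₗ[ℤ] ℤ := (LinearMap.proj i).comp ς.toIntLinearMap
  have hspan : Submodule.span ℤ (Set.range fun j : I₀ => F.b j) ≤ LinearMap.ker coord := by
    rw [Submodule.span_le]
    rintro _ ⟨j, rfl⟩
    have hij : i ≠ j := fun h => hi (h ▸ j.2)
    simp [coord, hς j j.2, hij]
  obtain ⟨n, hn, hnv⟩ :=
    (F.linearIndependent_b_of_mem_cones hI₀).exists_smul_mem_span_of_card_eq_finrank
      (by simp [hcard]) v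
  have hcoord := hspan hnv
  rw [LinearMap.mem_ker, map_smul] at hcoord
  exact (smul_eq_zero.mp hcoord).resolve_left hn

lemma toN_beta (hsec : ∀ v : Fin D → ℤ, F.toN (ς v) = v) {k : Fin D → ℤ} (hk : F.InSupport k) :
    F.toN (F.beta ς k) = 0 := by
  rw [beta, F.toN_sub, F.toN_psi hk, hsec, sub_self]

lemma beta_mem_effM {I₀ : Finset (Fin m)} (hI₀ : I₀ ∈ F.cones) (hcard : I₀.card = D)
    (hsec : ∀ v : Fin D → ℤ, F.toN (ς v) = v) (hς : ∀ i ∈ I₀, ς (F.b i) = Pi.single i 1)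
    {k : Fin D → ℤ} (hk : F.InSupport k) : F.beta ς k ∈ F.EffM := by
  refine AddSubmonoid.subset_closure
    (F.mem_effSet_of_nonneg_off_cone hI₀ (F.toN_beta hsec hk) fun i hi => ?_)
  simp [beta, F.splitting_apply_eq_zero_of_notMem hI₀ hcard hς k hi]

/-- The exponents `(Q^d, x^k)` of the monomial `w^v` under `w_j = Q^{e_j − ς(b_j)} x^{b_j}`. -/
def wExponent (ς : (Fin D → ℤ) →+ (Fin m → ℤ)) (v : Fin m → ℤ) : (Fin m → ℤ) × (Fin D → ℤ) :=
  (v - ς (F.toN v), F.toN v)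

lemma wExponent_injective : Function.Injective (F.wExponent ς) := by
  intro v w hvw
  obtain ⟨hd, hk⟩ := Prod.ext_iff.mp hvw
  simp only [wExponent] at hd hk
  rwa [hk, sub_left_inj] at hd

lemma wExponent_fst_sub_beta (v : Fin m → ℤ) :
    (F.wExponent ς v).1 - F.beta ς (F.wExponent ς v).2 =
      v - fun i => (F.Psi (F.toN v) i : ℤ) := by
  simp only [wExponent, beta]
  abel

lemma image_wExponent_Mmon (hsec : ∀ v : Fin D → ℤ, F.toN (ς v) = v) :
    F.wExponent ς '' F.Mmon = {p | F.InSupport p.2 ∧ p.1 - F.beta ς p.2 ∈ F.EffM} := by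
  ext p
  constructor
  · rintro ⟨v, hv, rfl⟩
    have hv' := (F.mem_Mmon_iff v).mp hv
    rwa [← F.wExponent_fst_sub_beta (ς := ς)] at hv'
  · obtain ⟨d, k⟩ := p
    rintro ⟨hk, hd⟩
    have hdk : F.toN (d + ς k) = k := by
      have hd0 := F.toN_eq_zero_of_mem_effM hd
      rw [F.toN_sub, F.toN_beta hsec hk, sub_zero] at hd0
      rw [F.toN_add, hd0, hsec, zero_add]
    have hexp : F.wExponent ς (d + ς k) = (d, k) := by
      simp [wExponent, hdk]
    refine ⟨d + ς k, (F.mem_Mmon_iff _).mpr ?_, hexp⟩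
    have hshift := F.wExponent_fst_sub_beta (ς := ς) (d + ς k)
    rw [hexp] at hshift
    rw [← hshift, hdk]
    exact ⟨hk, hd⟩

end Splitting

end SmoothFan

/-- with the splitting `ς` and `β(k) = Ψ(k) − ς(k)`, one has
`β(k) ∈ Eff` for every lattice point `k` of the support; moreover the family
`{w^{Ψ(k)} = Q^{β(k)} x^k}` is a topological `ℂ[[Q]]`-basis of `ℂ{M}`, expressed
concretely through the embedding `w`-monomial `v ↦ (Q\text{-exponent}, x\text{-exponent})
= (v − ς(π v), π v)`: this map is injective on `M` and its image is exactly
`{(d, k) : k ∈ N ∩ |Σ|, d − β(k) ∈ Eff}`, so that every element of `ℂ{M}` is uniquely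
`Σ_k c_k(Q)·Q^{β(k)} x^k` with `c_k ∈ ℂ[[Q]]`, i.e. `ℂ{M} = (⊕_k ℂ w^{Ψ(k)})[[Q]]`. -/
theorem w_monomials_topological_basis {D m : ℕ} (F : SmoothFan D m)
    (I₀ : Finset (Fin m)) (hI₀ : I₀ ∈ F.cones) (hcard : I₀.card = D)
    (ς : (Fin D → ℤ) →+ (Fin m → ℤ))
    (hsec : ∀ v : Fin D → ℤ, F.toN (ς v) = v)
    (hς : ∀ i ∈ I₀, ς (F.b i) = Pi.single i 1) :
    (∀ k : Fin D → ℤ, F.InSupport k → F.beta ς k ∈ F.EffM) ∧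
    Set.InjOn (fun v : Fin m → ℤ => (v - ς (F.toN v), F.toN v)) (F.Mmon : Set (Fin m → ℤ)) ∧
    (fun v : Fin m → ℤ => (v - ς (F.toN v), F.toN v)) '' (F.Mmon : Set (Fin m → ℤ)) =
      {p : (Fin m → ℤ) × (Fin D → ℤ) |
        F.InSupport p.2 ∧ p.1 - F.beta ς p.2 ∈ F.EffM} :=
  ⟨fun _ hk => F.beta_mem_effM hI₀ hcard hsec hς hk, F.wExponent_injective.injOn,
    F.image_wExponent_Mmon hsec⟩
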